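/- arXiv:2306.16421 — 2 statements merged into one kernel-verified Lean document; each statement's English description precedes it below -/
import Mathlib

section
/- Let R be a finite proper nearfield, k ≥ 1, and n > (|R|^k − 1)/(|R| − 1). Then for any v_1,…,v_k ∈ R^n, the smallest R-subgroup of R^n containing v_1,…,v_k is a proper subset of R^n. In other words, k vectors cannot generate R^n when n exceeds (|R|^k − 1)/(|R| − 1). -/
open scoped BigOperators

/-- A (left) nearfield: a zero-symmetric (left) nearring whose nonzero
elements form a multiplicative group. The additive group is abelian. -/
class Nearfield (R : Type*) extends AddCommGroup R, One R, Mul R, Inv R where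
  protected mul_assoc : ∀ a b c : R, a * b * c = a * (b * c)
  protected left_distrib : ∀ a b c : R, a * (b + c) = a * b + a * c
  protected zero_mul : ∀ a : R, (0 : R) * a = 0
  protected mul_zero : ∀ a : R, a * (0 : R) = 0
  protected one_mul : ∀ a : R, (1 : R) * a = a
  protected mul_one : ∀ a : R, a * (1 : R) = a
  protected one_ne_zero : (1 : R) ≠ 0
  protected mul_inv_cancel : ∀ a : R, a ≠ 0 → a * a⁻¹ = 1
  protected inv_mul_cancel : ∀ a : R, a ≠ 0 → a⁻¹ * a = 1

namespace Nearfield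

/-- A nearfield is proper if it is not a skewfield (right distributivity fails). -/
def IsProper (R : Type*) [Nearfield R] : Prop :=
  ∃ a b c : R, (a + b) * c ≠ a * c + b * c

variable {R : Type*} [Nearfield R]

/-- Right scalar multiplication on `R^n`, applied coordinatewise. -/
def vsmul {n : ℕ} (v : Fin n → R) (r : R) : Fin n → R := fun i => v i * r

/-- An `R`-subgroup of `R^n`: an additive subgroup closed under right scalar
multiplication. -/
def IsRSubgroup {n : ℕ} (H : Set (Fin n → R)) : Prop :=
  (0 : Fin n → R) ∈ H ∧ (∀ x ∈ H, ∀ y ∈ H, x + y ∈ H) ∧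
    (∀ x ∈ H, -x ∈ H) ∧ (∀ x ∈ H, ∀ r : R, vsmul x r ∈ H)

/-- `gen S` is the smallest `R`-subgroup containing `S`. -/
def gen {n : ℕ} (S : Set (Fin n → R)) : Set (Fin n → R) :=
  ⋂₀ {H : Set (Fin n → R) | IsRSubgroup H ∧ S ⊆ H}

/-- The support of a vector. -/
def supp {n : ℕ} (u : Fin n → R) : Set (Fin n) := {i | u i ≠ 0}

/-- `dirSum u = { Σ_i u_i r_i : r_i ∈ R }`. -/
def dirSum {n ℓ : ℕ} (u : Fin ℓ → Fin n → R) : Set (Fin n → R) :=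
  {v | ∃ r : Fin ℓ → R, v = ∑ i, vsmul (u i) (r i)}

/-- The "scalar product" `⟨x,y⟩ = Σ_i x_i·y_i`. -/
def dot {n : ℕ} (x y : Fin n → R) : R := ∑ i, x i * y i

/-- The weight of a vector: the number of its nonzero coordinates. -/
noncomputable def weight {n : ℕ} (u : Fin n → R) : ℕ := (supp u).ncard

/-- A vector is simple if it has weight one or two. -/
def IsSimple {n : ℕ} (u : Fin n → R) : Prop := weight u = 1 ∨ weight u = 2

/-- The orthogonal set `D^⊥`. -/
def perp {n : ℕ} (D : Set (Fin n → R)) : Set (Fin n → R) :=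
  {x | ∀ e ∈ D, dot e x = 0}

/-- `c(k,R)`: nonzero vectors of `R^k` whose first nonzero coordinate is `1`. -/
def cSet (R : Type*) [Nearfield R] (k : ℕ) : Set (Fin k → R) :=
  {u | ∃ i : Fin k, u i = 1 ∧ ∀ j : Fin k, j < i → u j = 0}

/-- The seed number of `T`: the least size of a set generating `T`. -/
noncomputable def seed {n : ℕ} (T : Set (Fin n → R)) : ℕ :=
  sInf {k | ∃ S : Finset (Fin n → R), S.card = k ∧ gen (↑S : Set (Fin n → R)) = T}

/-- Iterated linear-combination closures. -/
def LC {n : ℕ} (S : Set (Fin n → R)) : ℕ → Set (Fin n → R)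
  | 0 => S
  | m + 1 => {v | ∃ (ℓ : ℕ) (w : Fin ℓ → Fin n → R) (lam : Fin ℓ → R),
      (∀ i, w i ∈ LC S m) ∧ v = ∑ i, vsmul (w i) (lam i)}

end Nearfield

/-- Stirling numbers of the second kind. -/
def stirling2 : ℕ → ℕ → ℕ
  | 0, 0 => 1
  | 0, _ + 1 => 0
  | _ + 1, 0 => 0
  | n + 1, k + 1 => (k + 1) * stirling2 n (k + 1) + stirling2 n k

/-!
Read the vectors `v₁, …, v_k` as the rows of a `k × n` matrix. Every nonzero column is a left
multiple `a · w` of a vector `w ∈ c(k,R)`, and `c(k,R)` has at most `(|R|^k − 1)/(|R| − 1)`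
elements, so for larger `n` either some column is zero or two distinct columns `p ≠ q` satisfy
`v_j q = d · v_j p` for all `j`. In both cases the `v_j` lie in an `R`-subgroup of the form
`{x | x q = d · x p}`, which misses the unit vector at `q`.
-/

namespace Nearfield

variable {R : Type*} [Nearfield R]

instance : Nontrivial R := ⟨⟨1, 0, Nearfield.one_ne_zero⟩⟩

protected theorem mul_neg (a b : R) : a * -b = -(a * b) := by
  have h := Nearfield.left_distrib a b (-b)
  rw [add_neg_cancel, Nearfield.mul_zero] at h
  exact (neg_eq_of_add_eq_zero_right h.symm).symm

theorem inv_mul_cancel_left {a : R} (ha : a ≠ 0) (b : R) : a⁻¹ * (a * b) = b := by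
  rw [← Nearfield.mul_assoc, Nearfield.inv_mul_cancel a ha, Nearfield.one_mul]

theorem mul_inv_cancel_left {a : R} (ha : a ≠ 0) (b : R) : a * (a⁻¹ * b) = b := by
  rw [← Nearfield.mul_assoc, Nearfield.mul_inv_cancel a ha, Nearfield.one_mul]

section RSubgroup

variable {k n : ℕ}

theorem gen_subset_of_isRSubgroup {S H : Set (Fin n → R)} (hH : IsRSubgroup H) (hSH : S ⊆ H) :
    gen S ⊆ H :=
  fun _ hx => hx H ⟨hH, hSH⟩

theorem isRSubgroup_setOf_apply_eq_mul (p q : Fin n) (d : R) :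
    IsRSubgroup {x : Fin n → R | x q = d * x p} := by
  refine ⟨?_, fun x hx y hy => ?_, fun x hx => ?_, fun x hx r => ?_⟩
  · exact (Nearfield.mul_zero d).symm
  · change x q + y q = d * (x p + y p)
    rw [Nearfield.left_distrib, ← hx, ← hy]
  · change -x q = d * -x p
    rw [Nearfield.mul_neg, ← hx]
  · change x q * r = d * (x p * r)
    rw [← Nearfield.mul_assoc, ← hx]

theorem setOf_apply_eq_mul_ne_univ {p q : Fin n} {d : R} (h : p ≠ q ∨ d = 0) :
    {x : Fin n → R | x q = d * x p} ≠ Set.univ := by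
  classical
  intro huniv
  have hsingle : Pi.single q (1 : R) ∈ {x : Fin n → R | x q = d * x p} := huniv ▸ Set.mem_univ _
  rw [Set.mem_ofPred_eq, Pi.single_eq_same] at hsingle
  rcases h with hpq | rfl
  · rw [Pi.single_eq_of_ne hpq, Nearfield.mul_zero] at hsingle
    exact Nearfield.one_ne_zero hsingle
  · exact Nearfield.one_ne_zero (hsingle.trans (Nearfield.zero_mul _))

theorem gen_range_ne_univ_of_apply_eq_mul {v : Fin k → Fin n → R} {p q : Fin n} {d : R}
    (h : p ≠ q ∨ d = 0) (hv : ∀ j, v j q = d * v j p) : gen (Set.range v) ≠ Set.univ := by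
  intro huniv
  apply setOf_apply_eq_mul_ne_univ h
  refine Set.eq_univ_of_univ_subset (huniv ▸ gen_subset_of_isRSubgroup
    (isRSubgroup_setOf_apply_eq_mul p q d) ?_)
  rintro _ ⟨j, rfl⟩
  exact hv j

end RSubgroup

section NormalizedVectors

variable {k : ℕ}

theorem exists_eq_mul_cSet_of_ne_zero {u : Fin k → R} (hu : u ≠ 0) :
    ∃ a ≠ 0, ∃ w ∈ cSet R k, ∀ j, u j = a * w j := by
  classical
  obtain ⟨i, hmin⟩ : ∃ i, Minimal (· ∈ Finset.univ.filter fun j => u j ≠ 0) i :=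
    Finset.exists_minimal (by simpa [Finset.filter_nonempty_iff, funext_iff] using hu)
  have hui : u i ≠ 0 := (Finset.mem_filter.mp hmin.prop).2
  refine ⟨u i, hui, fun j => (u i)⁻¹ * u j, ⟨i, Nearfield.inv_mul_cancel _ hui, ?_⟩,
    fun j => (mul_inv_cancel_left hui _).symm⟩
  intro j hj
  have huj : u j = 0 := by
    by_contra huj
    exact hmin.not_lt (Finset.mem_filter.mpr ⟨Finset.mem_univ j, huj⟩) hj
  change (u i)⁻¹ * u j = 0
  rw [huj, Nearfield.mul_zero]

def cSetMk (x : Σ i : Fin k, (Finset.Ioi i → R)) : cSet R k :=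
  ⟨fun j => if h : x.1 < j then x.2 ⟨j, Finset.mem_Ioi.mpr h⟩ else if j = x.1 then 1 else 0,
    x.1, by simp, fun j hj => by simp [hj.not_gt, hj.ne]⟩

theorem cSetMk_surjective : Function.Surjective (cSetMk : _ → cSet R k) := by
  rintro ⟨u, i, hi, hlt⟩
  refine ⟨⟨i, fun j => u j⟩, Subtype.ext (funext fun j => ?_)⟩
  rcases lt_trichotomy j i with hj | rfl | hj
  · simp [cSetMk, hj.not_gt, hj.ne, hlt j hj]
  · simp [cSetMk, hi]
  · simp [cSetMk, hj]

theorem natCard_cSet_le [Fintype R] :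
    Nat.card (cSet R k) ≤ (Fintype.card R ^ k - 1) / (Fintype.card R - 1) := by
  classical
  have hcard : ∀ i : Fin k, Fintype.card (Finset.Ioi i → R) = Fintype.card R ^ (k - 1 - i) := by
    intro i
    rw [Fintype.card_fun, Fintype.card_coe, Fin.card_Ioi]
  calc Nat.card (cSet R k)
      ≤ Nat.card (Σ i : Fin k, (Finset.Ioi i → R)) :=
        Nat.card_le_card_of_surjective _ cSetMk_surjective
    _ = ∑ i ∈ Finset.range k, Fintype.card R ^ (k - 1 - i) := by
        rw [Nat.card_eq_fintype_card, Fintype.card_sigma, ← Fin.sum_univ_eq_sum_range]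
        exact Finset.sum_congr rfl fun i _ => hcard i
    _ = (Fintype.card R ^ k - 1) / (Fintype.card R - 1) := by
        rw [Finset.sum_range_reflect (Fintype.card R ^ ·), Nat.geomSum_eq Fintype.one_lt_card]

end NormalizedVectors

theorem exists_ne_apply_eq_mul_of_natCard_cSet_lt [Finite R] {k n : ℕ} {v : Fin k → Fin n → R}
    (hv : ∀ p, (fun j => v j p) ≠ 0) (hn : Nat.card (cSet R k) < n) :
    ∃ p q, p ≠ q ∧ ∃ d : R, ∀ j, v j q = d * v j p := by
  choose a ha w hw hvw using fun p => exists_eq_mul_cSet_of_ne_zero (hv p)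
  have hnotinj : ¬ Function.Injective fun p => (⟨w p, hw p⟩ : cSet R k) := fun hinj =>
    (Nat.card_le_card_of_injective _ hinj).not_gt (by simpa using hn)
  obtain ⟨p, q, hwpq, hpq⟩ := Function.not_injective_iff.mp hnotinj
  have hwpq : w p = w q := congrArg Subtype.val hwpq
  refine ⟨p, q, hpq, a q * (a p)⁻¹, fun j => ?_⟩
  rw [hvw p, hvw q, hwpq, Nearfield.mul_assoc, inv_mul_cancel_left (ha p)]

end Nearfield

open Nearfield

theorem gen_ne_univ_of_large_dim_general {R : Type*} [Nearfield R] [Fintype R]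
    {k n : ℕ}
    (hn : (Fintype.card R ^ k - 1) / (Fintype.card R - 1) < n)
    (v : Fin k → Fin n → R) :
    gen (Set.range v) ≠ Set.univ := by
  by_cases hcols : ∀ p, (fun j => v j p) ≠ 0
  · obtain ⟨p, q, hpq, d, hd⟩ :=
      exists_ne_apply_eq_mul_of_natCard_cSet_lt hcols (natCard_cSet_le.trans_lt hn)
    exact gen_range_ne_univ_of_apply_eq_mul (Or.inl hpq) hd
  · obtain ⟨p, hp⟩ := not_forall_not.mp hcols
    exact gen_range_ne_univ_of_apply_eq_mul (p := p) (q := p) (Or.inr rfl) fun j =>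
      (congrFun hp j).trans (Nearfield.zero_mul _).symm

/-- For a finite proper nearfield, `k` vectors cannot generate `R^n` when
`n > (|R|^k − 1)/(|R| − 1)`. -/
theorem gen_ne_univ_of_large_dim {R : Type*} [Nearfield R] [Fintype R]
    (hR : IsProper R) {k n : ℕ} (hk : 1 ≤ k)
    (hn : (Fintype.card R ^ k - 1) / (Fintype.card R - 1) < n)
    (v : Fin k → Fin n → R) :
    gen (Set.range v) ≠ Set.univ :=
  gen_ne_univ_of_large_dim_general hn v
end

section
/- Let R be a nearfield and T ⊆ R^n an R-subgroup. Suppose T_k ⊆ T_{k+1} are R-subgroups of R^n with decompositions T_k = ⊕_{i=1}^{ℓ} u_i R and T_{k+1} = ⊕_{i=1}^{ℓ'} u'_i R into nonzero vectors with mutually disjoint supports, and T_k ≠ T_{k+1}. Then the partition of ∪ supp(u'_i) by the supports of the u'_i strictly refines the partition by the supports of the u_i on the coordinates covered by both; in particular ℓ < ℓ' ≤ n. -/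
open scoped BigOperators

/-!
Write each `u i` in terms of the `u'`, say `u i = ∑ k, u' k * r i k`. Because the `u'` have
disjoint supports, on `supp (u' k)` this sum is just `u' k * r i k`; as a nearfield has no zero
divisors, `u' k` either lies inside `supp (u i)` (if `r i k ≠ 0`) or misses it. This gives the
refinement, and the sets `{k | r i k ≠ 0}` are nonempty and pairwise disjoint, so `ℓ ≤ ℓ'`.
If `ℓ = ℓ'`, each of these sets is a single `{e i}` with `e` a bijection, so every `u i` is a
nonzero multiple of `u' (e i)` and the two decompositions span the same set.
-/

open Nearfield Function

theorem Pairwise.injective_of_forall_mem {ι α : Type*} {s : ι → Set α}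
    (hs : Pairwise (Disjoint on s)) {f : ι → α} (hf : ∀ i, f i ∈ s i) : Injective f := by
  intro i j hij
  by_contra hne
  exact Set.disjoint_left.mp (hs hne) (hf i) (hij ▸ hf j)

namespace Nearfield

variable {R : Type*} [Nearfield R]

protected theorem mul_ne_zero {a b : R} (ha : a ≠ 0) (hb : b ≠ 0) : a * b ≠ 0 := by
  intro h
  apply hb
  calc b = a⁻¹ * a * b := by rw [Nearfield.inv_mul_cancel a ha, Nearfield.one_mul]
    _ = a⁻¹ * (a * b) := Nearfield.mul_assoc _ _ _
    _ = 0 := by rw [h, Nearfield.mul_zero]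

variable {n : ℕ}

theorem mem_supp {x : Fin n → R} {p : Fin n} : p ∈ supp x ↔ x p ≠ 0 := Iff.rfl

theorem supp_nonempty {x : Fin n → R} (hx : x ≠ 0) : (supp x).Nonempty :=
  Function.ne_iff.mp hx

theorem vsmul_zero (x : Fin n → R) : vsmul x 0 = 0 :=
  funext fun _ => Nearfield.mul_zero _

theorem vsmul_vsmul (x : Fin n → R) (a b : R) : vsmul (vsmul x a) b = vsmul x (a * b) :=
  funext fun _ => Nearfield.mul_assoc _ _ _

theorem mem_dirSum_self {ℓ : ℕ} (u : Fin ℓ → Fin n → R) (i : Fin ℓ) : u i ∈ dirSum u := by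
  refine ⟨Pi.single i 1, ?_⟩
  rw [Fintype.sum_eq_single i fun k hk => by rw [Pi.single_eq_of_ne hk, vsmul_zero],
    Pi.single_eq_same]
  exact (funext fun _ => Nearfield.mul_one _).symm

section DisjointSupports

variable {ℓ : ℕ} {u : Fin ℓ → Fin n → R}

theorem le_of_pairwise_disjoint_supp (hne : ∀ i, u i ≠ 0)
    (hu : Pairwise (Disjoint on fun i => supp (u i))) : ℓ ≤ n := by
  choose p hp using fun i => supp_nonempty (hne i)
  simpa using Fintype.card_le_of_injective p (hu.injective_of_forall_mem hp)

theorem sum_vsmul_apply_of_mem_supp (hu : Pairwise (Disjoint on fun i => supp (u i)))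
    (r : Fin ℓ → R) {i : Fin ℓ} {p : Fin n} (hp : p ∈ supp (u i)) :
    (∑ k, vsmul (u k) (r k)) p = u i p * r i := by
  rw [Finset.sum_apply, Fintype.sum_eq_single i fun k hk => ?_]
  · rfl
  have hpk : u k p = 0 := not_not.mp (Set.disjoint_right.mp (hu hk) hp)
  change u k p * r k = 0
  rw [hpk, Nearfield.zero_mul]

theorem supp_subset_supp_sum_vsmul (hu : Pairwise (Disjoint on fun i => supp (u i)))
    {r : Fin ℓ → R} {i : Fin ℓ} (hr : r i ≠ 0) : supp (u i) ⊆ supp (∑ k, vsmul (u k) (r k)) :=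
  fun _ hp => by
    rw [mem_supp, sum_vsmul_apply_of_mem_supp hu r hp]
    exact Nearfield.mul_ne_zero hp hr

theorem coeff_ne_zero_of_mem_supp (hu : Pairwise (Disjoint on fun i => supp (u i)))
    {r : Fin ℓ → R} {i : Fin ℓ} {p : Fin n} (hpi : p ∈ supp (u i))
    (hp : p ∈ supp (∑ k, vsmul (u k) (r k))) : r i ≠ 0 := by
  intro h
  rw [mem_supp, sum_vsmul_apply_of_mem_supp hu r hpi, h, Nearfield.mul_zero] at hp
  exact hp rfl

theorem exists_coeff_ne_zero {r : Fin ℓ → R} (h : ∑ k, vsmul (u k) (r k) ≠ 0) :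
    ∃ k, r k ≠ 0 := by
  by_contra! h0
  simp only [h0, vsmul_zero, Finset.sum_const_zero, ne_eq, not_true_eq_false] at h

end DisjointSupports

theorem dirSum_subset_of_eq_vsmul {ℓ ℓ' : ℕ} {u : Fin ℓ → Fin n → R} {u' : Fin ℓ' → Fin n → R}
    (e : Fin ℓ ≃ Fin ℓ') {c : Fin ℓ → R} (hc : ∀ i, c i ≠ 0)
    (h : ∀ i, u i = vsmul (u' (e i)) (c i)) : dirSum u' ⊆ dirSum u := by
  rintro v ⟨s, rfl⟩
  refine ⟨fun i => (c i)⁻¹ * s (e i), ?_⟩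
  rw [← e.sum_comp]
  refine Finset.sum_congr rfl fun i _ => ?_
  rw [h i, vsmul_vsmul, ← Nearfield.mul_assoc, Nearfield.mul_inv_cancel _ (hc i),
    Nearfield.one_mul]

section Refinement

variable {ℓ ℓ' : ℕ} {u : Fin ℓ → Fin n → R} {u' : Fin ℓ' → Fin n → R}

theorem exists_supp_subset_of_dirSum_subset
    (hu' : Pairwise (Disjoint on fun j => supp (u' j))) (hsub : dirSum u ⊆ dirSum u')
    (j : Fin ℓ') (hj : (supp (u' j) ∩ ⋃ i, supp (u i)).Nonempty) :
    ∃ i, supp (u' j) ⊆ supp (u i) := by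
  obtain ⟨p, hpj, hpu⟩ := hj
  obtain ⟨i, hpi⟩ := Set.mem_iUnion.mp hpu
  obtain ⟨r, hr⟩ := hsub (mem_dirSum_self u i)
  rw [hr] at hpi
  exact ⟨i, hr ▸ supp_subset_supp_sum_vsmul hu' (coeff_ne_zero_of_mem_supp hu' hpj hpi)⟩

theorem lt_of_dirSum_ssubset (hne : ∀ i, u i ≠ 0) (hne' : ∀ j, u' j ≠ 0)
    (hu : Pairwise (Disjoint on fun i => supp (u i)))
    (hu' : Pairwise (Disjoint on fun j => supp (u' j)))
    (hsub : dirSum u ⊆ dirSum u') (hneq : dirSum u ≠ dirSum u') : ℓ < ℓ' := by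
  choose r hr using fun i => hsub (mem_dirSum_self u i)
  have hsupp {i k} (hik : r i k ≠ 0) : supp (u' k) ⊆ supp (u i) :=
    hr i ▸ supp_subset_supp_sum_vsmul hu' hik
  have hunique {i i' k} (hik : r i k ≠ 0) (hi'k : r i' k ≠ 0) : i = i' := by
    by_contra hii'
    obtain ⟨p, hp⟩ := supp_nonempty (hne' k)
    exact Set.disjoint_left.mp (hu hii') (hsupp hik hp) (hsupp hi'k hp)
  choose e he using fun i => exists_coeff_ne_zero (hr i ▸ hne i)
  have he_inj : Injective e := fun i i' h => hunique (he i) (h ▸ he i')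
  refine lt_of_le_of_ne (by simpa using Fintype.card_le_of_injective e he_inj) fun hℓ => hneq ?_
  have he_bij : Bijective e :=
    (Fintype.bijective_iff_injective_and_card e).mpr ⟨he_inj, by simp [hℓ]⟩
  have hr_single (i : Fin ℓ) (k : Fin ℓ') (hk : k ≠ e i) : r i k = 0 := by
    obtain ⟨i', rfl⟩ := he_bij.2 k
    by_contra hik
    exact hk (congrArg e (hunique (he i') hik))
  refine (hsub.antisymm (dirSum_subset_of_eq_vsmul (Equiv.ofBijective e he_bij) he fun i => ?_))
  rw [hr i]
  exact Fintype.sum_eq_single (e i) fun k hk => by rw [hr_single i k hk, vsmul_zero]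

end Refinement

end Nearfield

/-- If `T_k ⊊ T_{k+1}` are `R`-subgroups with decompositions into nonzero
disjoint-support vectors, then the supports of the `u'_j` refine those of the
`u_i` on the covered coordinates, and `ℓ < ℓ' ≤ n`. -/
theorem support_refinement {R : Type*} [Nearfield R] {n ℓ ℓ' : ℕ}
    (u : Fin ℓ → Fin n → R) (u' : Fin ℓ' → Fin n → R)
    (hne : ∀ i, u i ≠ 0) (hne' : ∀ j, u' j ≠ 0)
    (hdisj : ∀ i j, i ≠ j → supp (u i) ∩ supp (u j) = ∅)
    (hdisj' : ∀ i j, i ≠ j → supp (u' i) ∩ supp (u' j) = ∅)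
    (hsub : dirSum u ⊆ dirSum u') (hneq : dirSum u ≠ dirSum u') :
    (∀ j : Fin ℓ', (supp (u' j) ∩ ⋃ i, supp (u i)).Nonempty →
        ∃ i : Fin ℓ, supp (u' j) ⊆ supp (u i)) ∧
      ℓ < ℓ' ∧ ℓ' ≤ n := by
  have hu : Pairwise (Disjoint on fun i => supp (u i)) := fun i j h =>
    Set.disjoint_iff_inter_eq_empty.mpr (hdisj i j h)
  have hu' : Pairwise (Disjoint on fun j => supp (u' j)) := fun i j h =>
    Set.disjoint_iff_inter_eq_empty.mpr (hdisj' i j h)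
  exact ⟨exists_supp_subset_of_dirSum_subset hu' hsub,
    lt_of_dirSum_ssubset hne hne' hu hu' hsub hneq, le_of_pairwise_disjoint_supp hne' hu'⟩
end
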